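/- The bigraft algebra (M, m, ≻, ≺) of nonempty {l,r}-decorated planar forests is the free bigraft algebra on one generator: for any bigraft algebra A and any a ∈ A, there exists a unique map φ : M → A preserving all three operations with φ(•) = a, where • is the one-vertex tree. -/

import Mathlib

/-- A planar rooted tree with `{l,r}`-decorated edges (admissible: no `r`-edge left of an
`l`-edge at a vertex): a tree is `B(F ⊗ G)` with `F` the `l`-children and `G` the
`r`-children. -/
inductive DTree : Type
  | node : List DTree → List DTree → DTree

/-- A nonempty planar decorated forest. -/
def DForest : Type := { l : List DTree // l ≠ [] }

/-- Left graft on lists: graft `g` on the root of the first tree, on the left. -/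
def succL (g : List DTree) : List DTree → List DTree
  | [] => []
  | (DTree.node l r) :: rest => DTree.node (g ++ l) r :: rest

/-- Right graft on lists: graft `f` on the root of the last tree of the first argument,
on the right. -/
def precL : List DTree → List DTree → List DTree
  | [], _ => []
  | [DTree.node l r], f => [DTree.node l (r ++ f)]
  | t :: t' :: ts, f => t :: precL (t' :: ts) f

theorem succL_ne (g : List DTree) : ∀ f : List DTree, f ≠ [] → succL g f ≠ [] := by
  intro f hf
  match f with
  | [] => exact absurd rfl hf
  | (DTree.node l r) :: rest => simp [succL]

theorem precL_ne : ∀ (g f : List DTree), g ≠ [] → precL g f ≠ [] := by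
  intro g f hg
  match g with
  | [] => exact absurd rfl hg
  | [DTree.node l r] => simp [precL]
  | t :: t' :: ts => simp [precL]

/-- Concatenation of forests. -/
def catF (x y : DForest) : DForest :=
  ⟨x.1 ++ y.1, fun h => x.2 (List.append_eq_nil_iff.mp h).1⟩

/-- Left graft `x ≻ y` of forests. -/
def succF (x y : DForest) : DForest := ⟨succL x.1 y.1, succL_ne x.1 y.1 y.2⟩

/-- Right graft `x ≺ y` of forests. -/
def precF (x y : DForest) : DForest := ⟨precL x.1 y.1, precL_ne x.1 y.1 x.2⟩

/-- Bilinear extension to the free vector space `M = K[DForest]` (the augmentation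
ideal of `BT`) of a binary operation on forests. -/
noncomputable def lift2 (K : Type*) [Field K] (f : DForest → DForest → DForest) :
    (DForest →₀ K) →ₗ[K] (DForest →₀ K) →ₗ[K] (DForest →₀ K) :=
  Finsupp.lift ((DForest →₀ K) →ₗ[K] (DForest →₀ K)) K DForest
    (fun a => Finsupp.lift (DForest →₀ K) K DForest
      (fun b => Finsupp.single (f a b) (1 : K)))


/-- The one-vertex tree `•`, generator of `M`. -/
def unitF : DForest := ⟨[DTree.node [] []], by simp⟩

/-!
A tree is `B(F ⊗ G) = (F ≻ •) ≺ G` and a forest is the product of its trees, so a morphism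
must send `B(F ⊗ G)` to `(φ F ≻ a) ≺ φ G` and `t₁ ⋯ tₙ` to `φ t₁ ∗ ⋯ ∗ φ tₙ`; this gives
uniqueness. For existence, the map defined by this recursion respects concatenation (by
associativity), `≻`, which grafts onto the root of the first tree, and `≺`, which grafts onto
the root of the last tree; the remaining five axioms are exactly what these two compatibilities
need. Since `F` or `G` may be empty, values are taken in `Option A`, with `none` for the empty
forest.
-/

theorem succL_nil_left (f : List DTree) : succL [] f = f := by
  match f with
  | [] => rfl
  | .node l r :: rest => rfl

theorem precL_nil_right : ∀ g : List DTree, precL g [] = g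
  | [] => rfl
  | [.node l r] => by simp [precL]
  | t :: t' :: ts => by rw [precL, precL_nil_right]

theorem precL_succL_unit (l r : List DTree) :
    precL (succL l [.node [] []]) r = [.node l r] := by
  simp [succL, precL]

structure IsBigraft {A : Type*} (star succ prec : A → A → A) : Prop where
  star_assoc : ∀ x y z, star (star x y) z = star x (star y z)
  succ_star : ∀ x y z, succ (star x y) z = succ x (succ y z)
  star_succ : ∀ x y z, star (succ x y) z = succ x (star y z)
  prec_prec : ∀ x y z, prec (prec x y) z = prec x (star y z)
  prec_star : ∀ x y z, prec (star x y) z = star x (prec y z)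
  prec_succ : ∀ x y z, prec (succ x y) z = succ x (prec y z)

namespace Bigraft

variable {A : Type*}

/-- `none` is the empty forest, a left unit for `≻` and a right unit for `≺`. -/
def leftOpt (f : A → A → A) : Option A → A → A
  | none, x => x
  | some y, x => f y x

def rightOpt (f : A → A → A) (x : A) : Option A → A
  | none => x
  | some y => f x y

@[simp] theorem leftOpt_none (f : A → A → A) : leftOpt f none = id := rfl

@[simp] theorem leftOpt_some (f : A → A → A) (x y : A) : leftOpt f (some y) x = f y x := rfl

@[simp] theorem rightOpt_none (f : A → A → A) (x : A) : rightOpt f x none = x := rfl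

@[simp] theorem rightOpt_some (f : A → A → A) (x y : A) : rightOpt f x (some y) = f x y := rfl

end Bigraft

namespace IsBigraft

open Bigraft

variable {A : Type*} {star succ prec : A → A → A} (h : IsBigraft star succ prec)
include h

theorem merge_assoc (o₁ o₂ o₃ : Option A) :
    (o₁.merge star o₂).merge star o₃ = o₁.merge star (o₂.merge star o₃) :=
  have : Std.Associative star := ⟨h.star_assoc⟩
  Std.Associative.assoc _ _ _

theorem leftOpt_merge (o₁ o₂ : Option A) (x : A) :
    leftOpt succ (o₁.merge star o₂) x = leftOpt succ o₁ (leftOpt succ o₂ x) := by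
  cases o₁ <;> cases o₂ <;> simp [h.succ_star]

theorem merge_leftOpt (o o' : Option A) (x : A) :
    (some (leftOpt succ o x)).merge star o' = ((some x).merge star o').map (leftOpt succ o) := by
  cases o <;> cases o' <;> simp [h.star_succ]

theorem rightOpt_leftOpt (o o' : Option A) (x : A) :
    rightOpt prec (leftOpt succ o x) o' = leftOpt succ o (rightOpt prec x o') := by
  cases o <;> cases o' <;> simp [h.prec_succ]

theorem rightOpt_rightOpt (o₁ o₂ : Option A) (x : A) :
    rightOpt prec (rightOpt prec x o₁) o₂ = rightOpt prec x (o₁.merge star o₂) := by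
  cases o₁ <;> cases o₂ <;> simp [h.prec_prec]

theorem rightOpt_star (o : Option A) (x y : A) :
    rightOpt prec (star x y) o = star x (rightOpt prec y o) := by
  cases o <;> simp [h.prec_star]

end IsBigraft

namespace Bigraft

variable {A : Type*}

section Eval

variable (star succ prec : A → A → A) (a : A)

mutual
def treeVal : DTree → A
  | .node l r => rightOpt prec (leftOpt succ (forestVal l) a) (forestVal r)

def forestVal : List DTree → Option A
  | [] => none
  | t :: ts => (some (treeVal t)).merge star (forestVal ts)
end

end Eval

variable {star succ prec : A → A → A} {a : A}

@[simp] theorem forestVal_nil : forestVal star succ prec a [] = none := rfl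

@[simp] theorem forestVal_cons (t : DTree) (ts : List DTree) :
    forestVal star succ prec a (t :: ts) =
      (some (treeVal star succ prec a t)).merge star (forestVal star succ prec a ts) := rfl

theorem treeVal_node (l r : List DTree) :
    treeVal star succ prec a (.node l r) =
      rightOpt prec (leftOpt succ (forestVal star succ prec a l) a)
        (forestVal star succ prec a r) := by
  rw [treeVal]

theorem forestVal_ne_none {l : List DTree} (hl : l ≠ []) :
    forestVal star succ prec a l ≠ none := by
  obtain ⟨t, ts, rfl⟩ := List.exists_cons_of_ne_nil hl
  simp [Option.merge_eq_none_iff]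

section Compatibility

variable (h : IsBigraft star succ prec)
include h

theorem forestVal_append (g f : List DTree) :
    forestVal star succ prec a (g ++ f) =
      (forestVal star succ prec a g).merge star (forestVal star succ prec a f) := by
  induction g with
  | nil => simp
  | cons t g ih => simp only [List.cons_append, forestVal_cons, ih, h.merge_assoc]

theorem treeVal_node_append_left (g l r : List DTree) :
    treeVal star succ prec a (.node (g ++ l) r) =
      leftOpt succ (forestVal star succ prec a g) (treeVal star succ prec a (.node l r)) := by
  rw [treeVal_node, treeVal_node, forestVal_append h, h.leftOpt_merge, h.rightOpt_leftOpt]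

theorem treeVal_node_append_right (l r f : List DTree) :
    treeVal star succ prec a (.node l (r ++ f)) =
      rightOpt prec (treeVal star succ prec a (.node l r)) (forestVal star succ prec a f) := by
  rw [treeVal_node, treeVal_node, forestVal_append h, h.rightOpt_rightOpt]

theorem forestVal_succL (g f : List DTree) :
    forestVal star succ prec a (succL g f) =
      (forestVal star succ prec a f).map (leftOpt succ (forestVal star succ prec a g)) := by
  match f with
  | [] => rfl
  | .node l r :: rest =>
    rw [succL, forestVal_cons, treeVal_node_append_left h, h.merge_leftOpt]
    rfl

theorem forestVal_precL : ∀ g f : List DTree, forestVal star succ prec a (precL g f) =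
    (forestVal star succ prec a g).map (rightOpt prec · (forestVal star succ prec a f))
  | [], _ => rfl
  | [.node l r], f => by simp [precL, treeVal_node_append_right h]
  | t :: t' :: ts, f => by
    obtain ⟨y, hy⟩ : ∃ y, forestVal star succ prec a (t' :: ts) = some y :=
      Option.ne_none_iff_exists'.mp (forestVal_ne_none (List.cons_ne_nil t' ts))
    rw [precL, forestVal_cons, forestVal_precL, forestVal_cons (t := t), hy]
    simp [h.rightOpt_star]

end Compatibility

structure IsForestHom (star succ prec : A → A → A) (a : A) (Φ : DForest → A) : Prop where
  map_cat : ∀ z w, Φ (catF z w) = star (Φ z) (Φ w)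
  map_succ : ∀ z w, Φ (succF z w) = succ (Φ z) (Φ w)
  map_prec : ∀ z w, Φ (precF z w) = prec (Φ z) (Φ w)
  map_unit : Φ unitF = a

def extendEmpty (Φ : DForest → A) (l : List DTree) : Option A :=
  if h : l = [] then none else some (Φ ⟨l, h⟩)

@[simp] theorem extendEmpty_nil (Φ : DForest → A) : extendEmpty Φ [] = none := rfl

theorem extendEmpty_of_ne_nil (Φ : DForest → A) {l : List DTree} (hl : l ≠ []) :
    extendEmpty Φ l = some (Φ ⟨l, hl⟩) :=
  dif_neg hl

namespace IsForestHom

variable {Φ : DForest → A} (hΦ : IsForestHom star succ prec a Φ)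
include hΦ

theorem extendEmpty_append (g f : List DTree) :
    extendEmpty Φ (g ++ f) = (extendEmpty Φ g).merge star (extendEmpty Φ f) := by
  rcases eq_or_ne g [] with rfl | hg
  · simp
  rcases eq_or_ne f [] with rfl | hf
  · simp
  rw [extendEmpty_of_ne_nil Φ hg, extendEmpty_of_ne_nil Φ hf,
    extendEmpty_of_ne_nil Φ (by simp [hg]), Option.merge_some_some]
  exact congrArg some (hΦ.map_cat ⟨g, hg⟩ ⟨f, hf⟩)

theorem extendEmpty_succL (g f : List DTree) :
    extendEmpty Φ (succL g f) = (extendEmpty Φ f).map (leftOpt succ (extendEmpty Φ g)) := by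
  rcases eq_or_ne g [] with rfl | hg
  · simp [succL_nil_left]
  rcases eq_or_ne f [] with rfl | hf
  · rfl
  rw [extendEmpty_of_ne_nil Φ hg, extendEmpty_of_ne_nil Φ hf,
    extendEmpty_of_ne_nil Φ (succL_ne g f hf), Option.map_some, leftOpt_some]
  exact congrArg some (hΦ.map_succ ⟨g, hg⟩ ⟨f, hf⟩)

theorem extendEmpty_precL (g f : List DTree) :
    extendEmpty Φ (precL g f) = (extendEmpty Φ g).map (rightOpt prec · (extendEmpty Φ f)) := by
  rcases eq_or_ne g [] with rfl | hg
  · rfl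
  rcases eq_or_ne f [] with rfl | hf
  · simp [precL_nil_right]
  rw [extendEmpty_of_ne_nil Φ hg, extendEmpty_of_ne_nil Φ hf,
    extendEmpty_of_ne_nil Φ (precL_ne g f hg), Option.map_some, rightOpt_some]
  exact congrArg some (hΦ.map_prec ⟨g, hg⟩ ⟨f, hf⟩)

theorem extendEmpty_eq_forestVal (l : List DTree) :
    extendEmpty Φ l = forestVal star succ prec a l := by
  induction l using DTree.rec_1
    (motive_1 := fun t => extendEmpty Φ [t] = some (treeVal star succ prec a t)) with
  | node l r ihl ihr =>
    rw [← precL_succL_unit, hΦ.extendEmpty_precL, hΦ.extendEmpty_succL, ihl, ihr,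
      extendEmpty_of_ne_nil Φ (List.cons_ne_nil _ _), treeVal_node]
    rw [show (⟨[.node [] []], _⟩ : DForest) = unitF from rfl, hΦ.map_unit]
    rfl
  | nil => rfl
  | cons t ts iht ihts =>
    rw [← List.singleton_append, hΦ.extendEmpty_append, iht, ihts]
    rfl

end IsForestHom

variable (star succ prec a) in
def forestHom (z : DForest) : A :=
  (forestVal star succ prec a z.1).get (Option.isSome_iff_ne_none.mpr (forestVal_ne_none z.2))

theorem some_forestHom (z : DForest) :
    some (forestHom star succ prec a z) = forestVal star succ prec a z.1 :=
  Option.some_get _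

theorem isForestHom_forestHom (h : IsBigraft star succ prec) :
    IsForestHom star succ prec a (forestHom star succ prec a) where
  map_cat z w := Option.some_injective _ <| by
    rw [some_forestHom]
    exact (forestVal_append h z.1 w.1).trans (by rw [← some_forestHom, ← some_forestHom]; rfl)
  map_succ z w := Option.some_injective _ <| by
    rw [some_forestHom]
    exact (forestVal_succL h z.1 w.1).trans (by rw [← some_forestHom, ← some_forestHom]; rfl)
  map_prec z w := Option.some_injective _ <| by
    rw [some_forestHom]
    exact (forestVal_precL h z.1 w.1).trans (by rw [← some_forestHom, ← some_forestHom]; rfl)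
  map_unit := Option.some_injective _ (some_forestHom unitF)

theorem existsUnique_isForestHom (h : IsBigraft star succ prec) (a : A) :
    ∃! Φ, IsForestHom star succ prec a Φ := by
  refine ⟨forestHom star succ prec a, isForestHom_forestHom h, fun Φ hΦ => funext fun z => ?_⟩
  apply Option.some_injective
  rw [some_forestHom, ← hΦ.extendEmpty_eq_forestVal, extendEmpty_of_ne_nil Φ z.2]
  rfl

section Linear

variable {K : Type*} [Field K] [AddCommGroup A] [Module K A]

theorem lift2_single_single (f : DForest → DForest → DForest) (z w : DForest) :
    lift2 K f (Finsupp.single z 1) (Finsupp.single w 1) = Finsupp.single (f z w) 1 := by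
  simp [lift2]

theorem map_lift2_iff (f : DForest → DForest → DForest) (op : A →ₗ[K] A →ₗ[K] A)
    (φ : (DForest →₀ K) →ₗ[K] A) :
    (∀ x y, φ (lift2 K f x y) = op (φ x) (φ y)) ↔
      ∀ z w, φ (Finsupp.single (f z w) 1) =
        op (φ (Finsupp.single z 1)) (φ (Finsupp.single w 1)) := by
  refine ⟨fun hφ z w => by rw [← hφ, lift2_single_single], fun hφ => ?_⟩
  suffices (lift2 K f).compr₂ φ = op.compl₁₂ φ φ from LinearMap.congr_fun₂ this
  refine Finsupp.lhom_ext' fun z => LinearMap.ext_ring <|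
    Finsupp.lhom_ext' fun w => LinearMap.ext_ring ?_
  simpa [lift2_single_single] using hφ z w

theorem isForestHom_iff (star succ prec : A →ₗ[K] A →ₗ[K] A) (a : A)
    (φ : (DForest →₀ K) →ₗ[K] A) :
    IsForestHom (star · ·) (succ · ·) (prec · ·) a (fun z => φ (Finsupp.single z 1)) ↔
      (∀ x y, φ (lift2 K catF x y) = star (φ x) (φ y)) ∧
      (∀ x y, φ (lift2 K succF x y) = succ (φ x) (φ y)) ∧
      (∀ x y, φ (lift2 K precF x y) = prec (φ x) (φ y)) ∧
      φ (Finsupp.single unitF 1) = a := by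
  rw [map_lift2_iff, map_lift2_iff, map_lift2_iff]
  exact ⟨fun ⟨h₁, h₂, h₃, h₄⟩ => ⟨h₁, h₂, h₃, h₄⟩, fun ⟨h₁, h₂, h₃, h₄⟩ => ⟨h₁, h₂, h₃, h₄⟩⟩

end Linear

end Bigraft

/-- `(M, m, ≻, ≺)` is the free bigraft algebra on one generator: for any
bigraft algebra `A` and any `a ∈ A` there is a unique linear map `φ : M → A`
preserving the three operations with `φ(•) = a`. -/
theorem M_free_bigraft (K : Type*) [Field K] {A : Type*} [AddCommGroup A] [Module K A]
    (starA succA precA : A →ₗ[K] A →ₗ[K] A)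
    (h1 : ∀ x y z : A, starA (starA x y) z = starA x (starA y z))
    (h2 : ∀ x y z : A, succA (starA x y) z = succA x (succA y z))
    (h3 : ∀ x y z : A, starA (succA x y) z = succA x (starA y z))
    (h4 : ∀ x y z : A, precA (precA x y) z = precA x (starA y z))
    (h5 : ∀ x y z : A, precA (starA x y) z = starA x (precA y z))
    (h6 : ∀ x y z : A, precA (succA x y) z = succA x (precA y z))
    (a : A) :
    ∃! φ : (DForest →₀ K) →ₗ[K] A,
      (∀ x y : DForest →₀ K, φ (lift2 K catF x y) = starA (φ x) (φ y)) ∧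
      (∀ x y : DForest →₀ K, φ (lift2 K succF x y) = succA (φ x) (φ y)) ∧
      (∀ x y : DForest →₀ K, φ (lift2 K precF x y) = precA (φ x) (φ y)) ∧
      φ (Finsupp.single unitF (1 : K)) = a := by
  have hA : IsBigraft (starA · ·) (succA · ·) (precA · ·) := ⟨h1, h2, h3, h4, h5, h6⟩
  exact (Finsupp.lift A K DForest).existsUnique_congr'
    (fun φ => Bigraft.isForestHom_iff starA succA precA a φ)
    |>.mp (Bigraft.existsUnique_isForestHom hA a)
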